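/- Let f : ℂ → ℂ be a nonconstant entire (everywhere analytic) function and let x ∈ ℂ. Then x lies in the postcritical set ⋃_{k≥1} f^[k] '' {z : f′(z) = 0} if and only if there exist n ≥ 1 and y ∈ ℂ with f^[n](y) = x such that the order of vanishing of z ↦ f^[n](z) − x at y is at least 2. -/

import Mathlib

/-!
The local degree of an analytic map at `y` is at least `2` exactly when its derivative vanishes
at `y`. By the chain rule `(f^[n])'(y) = ∏_{i<n} f'(f^[i] y)`, so `f^[n]` is critical at `y`
iff some `f^[i] y` with `i < n` is critical for `f`, and then `f^[n] y = f^[n-i] (f^[i] y)` is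
postcritical.
-/

section Iterate

variable {𝕜 E : Type*} [NontriviallyNormedField 𝕜] [NormedAddCommGroup E] [NormedSpace 𝕜 E]

theorem analyticAt_iterate {f : E → E} (hf : ∀ z, AnalyticAt 𝕜 f z) (n : ℕ) (z : E) :
    AnalyticAt 𝕜 f^[n] z := by
  induction n generalizing z with
  | zero => exact analyticAt_id
  | succ n ih =>
    rw [Function.iterate_succ']
    exact (hf _).comp (ih z)

theorem deriv_iterate {f : 𝕜 → 𝕜} (hf : Differentiable 𝕜 f) (n : ℕ) (y : 𝕜) :
    deriv f^[n] y = ∏ i ∈ Finset.range n, deriv f (f^[i] y) := by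
  induction n with
  | zero => simp
  | succ n ih =>
    rw [Function.iterate_succ', Finset.prod_range_succ,
      deriv_comp y (hf _) (hf.iterate n y), ih, mul_comm]

theorem deriv_iterate_eq_zero_iff {f : 𝕜 → 𝕜} (hf : Differentiable 𝕜 f) (n : ℕ) (y : 𝕜) :
    deriv f^[n] y = 0 ↔ ∃ i < n, deriv f (f^[i] y) = 0 := by
  simp [deriv_iterate hf, Finset.prod_eq_zero_iff]

end Iterate

theorem mem_iUnion_iterate_image_iff {α : Type*} (f : α → α) (s : Set α) (x : α) :
    x ∈ ⋃ k : ℕ, ⋃ _ : 1 ≤ k, f^[k] '' s ↔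
      ∃ n : ℕ, 1 ≤ n ∧ ∃ y : α, f^[n] y = x ∧ ∃ i < n, f^[i] y ∈ s := by
  simp only [Set.mem_iUnion, Set.mem_image]
  constructor
  · rintro ⟨k, hk, c, hc, rfl⟩
    exact ⟨k, hk, c, rfl, 0, hk, hc⟩
  · rintro ⟨n, -, y, rfl, i, hi, hy⟩
    refine ⟨n - i, by omega, f^[i] y, hy, ?_⟩
    rw [← Function.iterate_add_apply, Nat.sub_add_cancel hi.le]

theorem two_le_analyticOrderAt_sub_iff {𝕜 E : Type*} [NontriviallyNormedField 𝕜] [CharZero 𝕜]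
    [NormedAddCommGroup E] [NormedSpace 𝕜 E] [CompleteSpace E] {g : 𝕜 → E} {y : 𝕜}
    (hg : AnalyticAt 𝕜 g y) :
    2 ≤ analyticOrderAt (fun z => g z - g y) y ↔ deriv g y = 0 := by
  rw [← hg.analyticOrderAt_deriv_add_one, one_add_one_eq_two.symm,
    ENat.add_le_add_iff_right ENat.one_ne_top, Order.one_le_iff_ne_zero,
    analyticOrderAt_ne_zero, and_iff_right hg.deriv]

theorem mem_postcritical_iff_exists_degree_ge_two_general
    (f : ℂ → ℂ) (hf : ∀ z, AnalyticAt ℂ f z) (x : ℂ) :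
    x ∈ (⋃ k : ℕ, ⋃ _ : 1 ≤ k, f^[k] '' {z : ℂ | deriv f z = 0}) ↔
      ∃ n : ℕ, 1 ≤ n ∧ ∃ y : ℂ, f^[n] y = x ∧
        ∀ h : AnalyticAt ℂ (fun z => f^[n] z - x) y, 2 ≤ analyticOrderAt (fun z => f^[n] z - x) y := by
  have hdiff : Differentiable ℂ f := fun z => (hf z).differentiableAt
  rw [mem_iUnion_iterate_image_iff]
  refine exists_congr fun n => and_congr_right fun _ => exists_congr fun y =>
    and_congr_right fun hy => ?_
  subst hy
  have hfn := analyticAt_iterate hf n y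
  rw [forall_prop_of_true (hfn.fun_sub analyticAt_const), two_le_analyticOrderAt_sub_iff hfn,
    deriv_iterate_eq_zero_iff hdiff]
  rfl

/-- For a nonconstant entire map `f : ℂ → ℂ`, a point `x` lies in the postcritical set
`⋃_{k≥1} f^[k] '' {z : f′ z = 0}` if and only if there exist `n ≥ 1` and `y` with
`f^[n] y = x` such that the order of vanishing of `z ↦ f^[n] z - x` at `y` is at
least `2` (i.e. the local degree of `f^[n]` at `y` is at least `2`). -/
theorem mem_postcritical_iff_exists_degree_ge_two
    (f : ℂ → ℂ) (hf : ∀ z, AnalyticAt ℂ f z)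
    (hnc : ¬ ∃ c : ℂ, ∀ z, f z = c) (x : ℂ) :
    x ∈ (⋃ k : ℕ, ⋃ _ : 1 ≤ k, f^[k] '' {z : ℂ | deriv f z = 0}) ↔
      ∃ n : ℕ, 1 ≤ n ∧ ∃ y : ℂ, f^[n] y = x ∧
        ∀ h : AnalyticAt ℂ (fun z => f^[n] z - x) y, 2 ≤ analyticOrderAt (fun z => f^[n] z - x) y :=
  mem_postcritical_iff_exists_degree_ge_two_general f hf x
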